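/- Without adversarial perturbation (Ω = {0}), zero source risk does not guarantee robustness on the target: there exists a hypothesis class and distributions where a detector G has E_{x∼U_X}𝟙[G(x)≠0] = 0 and E_{x∼P_X}𝟙[G(x)≠1] = 0 but the robust target OOD error E_{x∼Q_X} sup_{‖δ‖≤ε}𝟙[G(x+δ)≠0] > 0 even when d_𝒢(Q_X,U_X) = 0 for the non-robust loss. Concretely, in the illustration example with r = 2.05 and ε = 0.1: G_r classifies all of P_X's support and all of U_X's and Q_X's supports correctly without perturbation, but there exist points x in the support of Q_X (e.g., x = (2.0, 0)) and perturbations ‖δ‖₂ ≤ 0.1 with G_r(x+δ) = 0, i.e., the adversary fools the detector. -/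
import Mathlib


open MeasureTheory Metric Classical

/-- The point `(a, b)` in the Euclidean plane. -/
noncomputable def pt (a b : ℝ) : EuclideanSpace ℝ (Fin 2) :=
  (WithLp.equiv 2 (Fin 2 → ℝ)).symm ![a, b]

/-- The threshold detector `G_r(x) = 𝟙[‖x‖₂ ≥ r]`. -/
noncomputable def Gr (r : ℝ) (x : EuclideanSpace ℝ (Fin 2)) : ℕ :=
  if r ≤ ‖x‖ then 1 else 0

/-- The robust 0-1 loss `sup_{‖δ‖₂ ≤ ε} 𝟙[G_r(x+δ) ≠ y]`. -/
noncomputable def robLoss (r ε : ℝ) (y : ℕ) (x : EuclideanSpace ℝ (Fin 2)) : ℝ :=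
  if ∃ δ : EuclideanSpace ℝ (Fin 2), ‖δ‖ ≤ ε ∧ Gr r (x + δ) ≠ y then 1 else 0

/-- The uniform distribution on the closed unit disk centered at `c`. -/
noncomputable def unifDisk (c : EuclideanSpace ℝ (Fin 2)) :
    Measure (EuclideanSpace ℝ (Fin 2)) :=
  (volume (Metric.closedBall c 1))⁻¹ • volume.restrict (Metric.closedBall c 1)

lemma norm_pt (a b : ℝ) : ‖pt a b‖ = Real.sqrt (a^2 + b^2) := by
  simp [pt, EuclideanSpace.norm_eq, Fin.sum_univ_two, sq_abs, sq]

lemma pt_add (a b c d : ℝ) : pt a b + pt c d = pt (a + c) (b + d) := by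
  simp only [pt]
  ext i
  fin_cases i <;> simp

lemma pt_sub (a b c d : ℝ) : pt a b - pt c d = pt (a - c) (b - d) := by
  simp only [pt]
  ext i
  fin_cases i <;> simp

/-- Without perturbation, `G_2` classifies the supports of `P_X` (label 0),
`U_X` and `Q_X` (label 1) perfectly, yet an adversary with budget `0.1` can fool
it on a point of the support of `Q_X`: zero unperturbed source risk does not
guarantee robustness on the target. -/
theorem unperturbed_training_not_robust :
    (∀ x : EuclideanSpace ℝ (Fin 2), ‖x‖ ≤ 1 → Gr 2 x = 0) ∧
    (∀ x : EuclideanSpace ℝ (Fin 2), ‖x - pt 0 3‖ ≤ 1 → Gr 2 x = 1) ∧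
    (∀ x : EuclideanSpace ℝ (Fin 2), ‖x - pt 3 0‖ ≤ 1 → Gr 2 x = 1) ∧
    (∃ x δ : EuclideanSpace ℝ (Fin 2),
      ‖x - pt 3 0‖ ≤ 1 ∧ ‖δ‖ ≤ 0.1 ∧ Gr 2 (x + δ) = 0) := by
  have h03 : ‖pt 0 3‖ = 3 := by
    rw [norm_pt, show ((0:ℝ)^2 + 3^2) = 3^2 by norm_num, Real.sqrt_sq (by norm_num)]
  have h30 : ‖pt 3 0‖ = 3 := by
    rw [norm_pt, show ((3:ℝ)^2 + 0^2) = 3^2 by norm_num, Real.sqrt_sq (by norm_num)]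
  refine ⟨fun x hx => ?_, fun x hx => ?_, fun x hx => ?_, pt 2 0, pt (-0.1) 0, ?_, ?_, ?_⟩
  · rw [Gr, if_neg]; linarith
  · rw [Gr, if_pos]
    have := norm_sub_norm_le (pt 0 3) x
    rw [norm_sub_rev x] at hx
    linarith [h03 ▸ this]
  · rw [Gr, if_pos]
    have := norm_sub_norm_le (pt 3 0) x
    rw [norm_sub_rev x] at hx
    linarith [h30 ▸ this]
  · rw [pt_sub, show (2:ℝ) - 3 = -1 by norm_num, show (0:ℝ) - 0 = 0 by norm_num,
      norm_pt]
    rw [show ((-1:ℝ)^2 + 0^2) = 1 by norm_num, Real.sqrt_one]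
  · rw [norm_pt]
    rw [show ((-0.1:ℝ)^2 + 0^2) = 0.1^2 by norm_num, Real.sqrt_sq (by norm_num)]
  · rw [pt_add, show (2:ℝ) + -0.1 = 1.9 by norm_num, show (0:ℝ) + 0 = 0 by norm_num,
      Gr, if_neg]
    rw [norm_pt, show ((1.9:ℝ)^2 + 0^2) = 1.9^2 by norm_num, Real.sqrt_sq (by norm_num)]
    norm_num
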